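/- Let (X, d) be a geodesic space satisfying the non-branching condition (two geodesics with the same endpoints sharing an interior point are equal). Let φ₀, φ₁, φ₂ ∈ X with φ₀ ≠ φ₁ ≠ φ₂, suppose x lies on some geodesic from φ₀ to φ₁ with φ₀ < x < φ₁, and suppose there exist two distinct geodesics joining φ₁ to φ₂. Then d(x, φ₁) + d(φ₁, φ₂) > d(x, φ₂). -/

import Mathlib

def IsGeodesic {X : Type*} [MetricSpace X] (a b : X) (f : ℝ → X) : Prop :=
  f 0 = a ∧ f (dist a b) = b ∧
    ∀ s ∈ Set.Icc (0 : ℝ) (dist a b), ∀ t ∈ Set.Icc (0 : ℝ) (dist a b),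
      dist (f s) (f t) = |s - t|

def GeodesicSpace (X : Type*) [MetricSpace X] : Prop :=
  ∀ a b : X, ∃ f : ℝ → X, IsGeodesic a b f

/-- `MBtw p q r` means `p < q < r`: `q` is strictly between `p` and `r`. -/
def MBtw {X : Type*} [MetricSpace X] (p q r : X) : Prop :=
  p ≠ q ∧ q ≠ r ∧ dist p q + dist q r = dist p r
/-- Non-branching: two geodesics with the same endpoints sharing an interior point agree
on the whole parameter interval. -/
def NonBranching (X : Type*) [MetricSpace X] : Prop :=
  ∀ p q : X, ∀ f g : ℝ → X, IsGeodesic p q f → IsGeodesic p q g →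
    (∃ t ∈ Set.Ioo (0 : ℝ) (dist p q), f t = g t) →
    ∀ t ∈ Set.Icc (0 : ℝ) (dist p q), f t = g t

/-!
If `d(x, φ₂) = d(x, φ₁) + d(φ₁, φ₂)`, then following the geodesic through `x` from `x` to `φ₁`
and continuing along either `g₁` or `g₂` gives two geodesics from `x` to `φ₂`. They share the
nondegenerate initial segment from `x` to `φ₁`, so by non-branching they coincide, and hence so do
`g₁` and `g₂`.
-/

open Set

namespace IsGeodesic

variable {X : Type*} [MetricSpace X] {a b c : X} {f g : ℝ → X} {s t : ℝ}

theorem dist_apply_apply (hf : IsGeodesic a b f) (hs : s ∈ Icc 0 (dist a b))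
    (ht : t ∈ Icc 0 (dist a b)) : dist (f s) (f t) = |s - t| :=
  hf.2.2 s hs t ht

theorem dist_left_apply (hf : IsGeodesic a b f) (ht : t ∈ Icc 0 (dist a b)) :
    dist a (f t) = t := by
  have h := hf.dist_apply_apply (left_mem_Icc.2 dist_nonneg) ht
  rwa [hf.1, zero_sub, abs_neg, abs_of_nonneg ht.1] at h

theorem dist_apply_right (hf : IsGeodesic a b f) (ht : t ∈ Icc 0 (dist a b)) :
    dist (f t) b = dist a b - t := by
  have h := hf.dist_apply_apply ht (right_mem_Icc.2 dist_nonneg)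
  rwa [hf.2.1, abs_sub_comm, abs_of_nonneg (sub_nonneg.2 ht.2)] at h

theorem shift (hf : IsGeodesic a b f) {t₀ : ℝ} (ht₀ : t₀ ∈ Icc 0 (dist a b)) :
    IsGeodesic (f t₀) b (fun t => f (t₀ + t)) := by
  have hlen : dist (f t₀) b = dist a b - t₀ := hf.dist_apply_right ht₀
  refine ⟨by simp, by simp only [hlen, add_sub_cancel, hf.2.1], fun s hs t ht => ?_⟩
  rw [hlen] at hs ht
  rw [hf.dist_apply_apply ⟨by linarith [hs.1, ht₀.1], by linarith [hs.2]⟩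
    ⟨by linarith [ht.1, ht₀.1], by linarith [ht.2]⟩, add_sub_add_left_eq_sub]

end IsGeodesic

noncomputable def concatAt {X : Type*} (ℓ : ℝ) (f g : ℝ → X) (t : ℝ) : X :=
  if t ≤ ℓ then f t else g (t - ℓ)

section concatAt

variable {X : Type*} {ℓ t : ℝ} {f g : ℝ → X}

theorem concatAt_of_le (h : t ≤ ℓ) : concatAt ℓ f g t = f t := if_pos h

theorem concatAt_of_lt (h : ℓ < t) : concatAt ℓ f g t = g (t - ℓ) := if_neg h.not_ge

theorem concatAt_add (hfg : f ℓ = g 0) (ht : 0 ≤ t) : concatAt ℓ f g (ℓ + t) = g t := by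
  rcases ht.eq_or_lt with rfl | ht
  · rw [add_zero, concatAt_of_le le_rfl, hfg]
  · rw [concatAt_of_lt (lt_add_of_pos_right ℓ ht), add_sub_cancel_left]

end concatAt

namespace IsGeodesic

variable {X : Type*} [MetricSpace X] {a b c : X} {f g : ℝ → X}

theorem dist_apply_apply_of_dist_eq_add (hf : IsGeodesic a b f) (hg : IsGeodesic b c g)
    (h : dist a c = dist a b + dist b c) {s t : ℝ} (hs : s ∈ Icc 0 (dist a b))
    (ht : t ∈ Icc 0 (dist b c)) : dist (f s) (g t) = dist a b - s + t := by
  have hfb := hf.dist_apply_right hs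
  have hbg := hg.dist_left_apply ht
  have hgc := hg.dist_apply_right ht
  have haf := hf.dist_left_apply hs
  refine le_antisymm ?_ ?_
  · calc dist (f s) (g t) ≤ dist (f s) b + dist b (g t) := dist_triangle _ _ _
      _ = dist a b - s + t := by rw [hfb, hbg]
  · have := dist_triangle4 a (f s) (g t) c
    linarith

theorem concatAt (hf : IsGeodesic a b f) (hg : IsGeodesic b c g)
    (h : dist a c = dist a b + dist b c) : IsGeodesic a c (concatAt (dist a b) f g) := by
  have hab := dist_nonneg (x := a) (y := b)
  have hbc := dist_nonneg (x := b) (y := c)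
  refine ⟨by rw [concatAt_of_le hab, hf.1], ?_, fun s hs t ht => ?_⟩
  · rw [h, concatAt_add (hf.2.1.trans hg.1.symm) hbc, hg.2.1]
  rw [h] at hs ht
  wlog hst : s ≤ t generalizing s t
  · rw [dist_comm, abs_sub_comm]
    exact this t ht s hs (le_of_not_ge hst)
  rw [abs_of_nonpos (sub_nonpos.2 hst), neg_sub]
  rcases le_or_gt t (dist a b) with htl | hlt
  · rw [concatAt_of_le htl, concatAt_of_le (hst.trans htl),
      hf.dist_apply_apply ⟨hs.1, hst.trans htl⟩ ⟨ht.1, htl⟩, abs_sub_comm,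
      abs_of_nonneg (sub_nonneg.2 hst)]
  rcases le_or_gt s (dist a b) with hsl | hls
  · rw [concatAt_of_le hsl, concatAt_of_lt hlt,
      hf.dist_apply_apply_of_dist_eq_add hg h ⟨hs.1, hsl⟩ ⟨by linarith, by linarith [ht.2]⟩]
    ring
  · rw [concatAt_of_lt hls, concatAt_of_lt hlt,
      hg.dist_apply_apply ⟨by linarith, by linarith [hs.2]⟩ ⟨by linarith, by linarith [ht.2]⟩,
      abs_sub_comm, abs_of_nonneg (by linarith)]
    ring

end IsGeodesic

theorem stmt15_general {X : Type*} [MetricSpace X] (hnb : NonBranching X)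
    (φ₀ φ₁ φ₂ x : X) (hx : MBtw φ₀ x φ₁)
    (hgx : ∃ g : ℝ → X, IsGeodesic φ₀ φ₁ g ∧
      ∃ t ∈ Set.Ioo (0 : ℝ) (dist φ₀ φ₁), g t = x)
    (g₁ g₂ : ℝ → X) (hg₁ : IsGeodesic φ₁ φ₂ g₁) (hg₂ : IsGeodesic φ₁ φ₂ g₂)
    (hne : ∃ t ∈ Set.Icc (0 : ℝ) (dist φ₁ φ₂), g₁ t ≠ g₂ t) :
    dist x φ₁ + dist φ₁ φ₂ > dist x φ₂ := by
  obtain ⟨g, hg, t₀, ht₀, rfl⟩ := hgx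
  obtain ⟨t, ht, hne⟩ := hne
  by_contra! hle
  have hsplit := le_antisymm (dist_triangle (g t₀) φ₁ φ₂) hle
  obtain ⟨γ, hγ⟩ : ∃ γ, IsGeodesic (g t₀) φ₁ γ := ⟨_, hg.shift (Ioo_subset_Icc_self ht₀)⟩
  have hγ₁ := hγ.concatAt hg₁ hsplit
  have hγ₂ := hγ.concatAt hg₂ hsplit
  have ha : 0 < dist (g t₀) φ₁ := dist_pos.2 hx.2.1
  have hb := dist_nonneg (x := φ₁) (y := φ₂)
  have hagree := hnb _ _ _ _ hγ₁ hγ₂ ⟨dist (g t₀) φ₁ / 2,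
    ⟨half_pos ha, by rw [hsplit]; linarith⟩,
    by rw [concatAt_of_le (half_le_self ha.le), concatAt_of_le (half_le_self ha.le)]⟩
  have hat := hagree (dist (g t₀) φ₁ + t) ⟨by linarith [ht.1], by rw [hsplit]; linarith [ht.2]⟩
  rw [concatAt_add (hγ.2.1.trans hg₁.1.symm) ht.1,
    concatAt_add (hγ.2.1.trans hg₂.1.symm) ht.1] at hat
  exact hne hat

theorem stmt15 {X : Type*} [MetricSpace X] (hX : GeodesicSpace X) (hnb : NonBranching X)
    (φ₀ φ₁ φ₂ x : X) (h12 : φ₁ ≠ φ₂) (hx : MBtw φ₀ x φ₁)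
    (hgx : ∃ g : ℝ → X, IsGeodesic φ₀ φ₁ g ∧
      ∃ t ∈ Set.Ioo (0 : ℝ) (dist φ₀ φ₁), g t = x)
    (g₁ g₂ : ℝ → X) (hg₁ : IsGeodesic φ₁ φ₂ g₁) (hg₂ : IsGeodesic φ₁ φ₂ g₂)
    (hne : ∃ t ∈ Set.Icc (0 : ℝ) (dist φ₁ φ₂), g₁ t ≠ g₂ t) :
    dist x φ₁ + dist φ₁ φ₂ > dist x φ₂ :=
  stmt15_general hnb φ₀ φ₁ φ₂ x hx hgx g₁ g₂ hg₁ hg₂ hne
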